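/- Fix an even number d and an ordinal κ. Let U_Par be the graph whose vertices are tuples (λ₁, λ₃, …, λ_{d−1}) of ordinals below κ indexed by the odd numbers in [0,d], with an edge labelled by priority x ∈ {0,…,d} from (λ₁,…,λ_{d−1}) to (λ'₁,…,λ'_{d−1}) if and only if: (λ'₁,…,λ'_{x−1}) ≤_lex (λ₁,…,λ_{x−1}) when x is even, and (λ'₁,…,λ'_x) <_lex (λ₁,…,λ_x) when x is odd (the comparisons being lexicographic on the truncated tuples of entries with odd index less than x). Then every infinite path in U_Par satisfies the parity condition: the minimal priority occurring infinitely often among its edge labels is even. -/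

import Mathlib

/-- Strict lexicographic comparison of the first `t` entries: `v <lex v'`. -/
def lexLtBelow (t : ℕ) (v v' : ℕ → Ordinal) : Prop :=
  ∃ j < t, (∀ i < j, v i = v' i) ∧ v j < v' j

/-- Non-strict lexicographic comparison of the first `t` entries: `v ≤lex v'`. -/
def lexLeBelow (t : ℕ) (v v' : ℕ → Ordinal) : Prop :=
  lexLtBelow t v v' ∨ ∀ i < t, v i = v' i

/-- Edge of priority `x` in the universal graph for parity: vertices are tuples
`(λ₁, λ₃, …)` of ordinals indexed by odd numbers (entry `i` stands for index `2i+1`).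
For `x` even the truncated tuple of the target must be `≤lex` that of the source
(entries with odd index `< x`, i.e. the first `x/2` entries); for `x` odd it must be
`<lex` (entries with odd index `≤ x`, i.e. the first `x/2 + 1` entries). -/
def UParEdge (x : ℕ) (v v' : ℕ → Ordinal) : Prop :=
  if Even x then lexLeBelow (x / 2) v' v else lexLtBelow (x / 2 + 1) v' v

/-- The minimal value occurring infinitely often in the sequence `x` is even. -/
def MinInfEven (x : ℕ → ℕ) : Prop :=
  ∃ p, Even p ∧ (∀ N, ∃ n ≥ N, x n = p) ∧ ∀ q < p, ∃ N, ∀ n ≥ N, x n ≠ q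

/-!
Let `p` be the least priority occurring infinitely often and suppose `p = 2k + 1` is odd.
From some point on every priority is at least `p`, and then each edge makes the prefix
`(λ₁, …, λ_p)` of the vertex weakly decrease lexicographically, while every edge of priority
`p` makes it decrease strictly. Lexicographic order on tuples of ordinals is well-founded, so
this cannot happen infinitely often.
-/

open Filter

section Priorities

variable {α : Type*} {l : Filter α} {x : α → ℕ}

theorem eventually_le_of_forall_lt_eventually_ne {p : ℕ} (h : ∀ q < p, ∀ᶠ n in l, x n ≠ q) :
    ∀ᶠ n in l, p ≤ x n := by
  have hall : ∀ᶠ n in l, ∀ q ∈ Finset.range p, x n ≠ q :=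
    (Finset.range p).eventually_all.2 fun q hq => h q (Finset.mem_range.1 hq)
  exact hall.mono fun n hn => not_lt.1 fun hlt => hn (x n) (Finset.mem_range.2 hlt) rfl

theorem exists_frequently_eq_of_eventually_le [l.NeBot] {d : ℕ} (hx : ∀ᶠ n in l, x n ≤ d) :
    ∃ p, ∃ᶠ n in l, x n = p := by
  by_contra h
  simp only [not_exists, not_frequently] at h
  obtain ⟨n, hgt, hle⟩ :=
    ((eventually_le_of_forall_lt_eventually_ne fun q (_ : q < d + 1) => h q).and hx).exists
  omega

end Priorities

theorem not_frequently_succ_lt_of_eventually_succ_le {β : Type*} [Preorder β] [WellFoundedLT β]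
    {g : ℕ → β} (hle : ∀ᶠ n in atTop, g (n + 1) ≤ g n) : ¬∃ᶠ n in atTop, g (n + 1) < g n := by
  intro hlt
  obtain ⟨N, hN⟩ := eventually_atTop.1 hle
  obtain ⟨_, ⟨m, hm, rfl⟩, hmin⟩ :=
    wellFounded_lt.has_min {b | ∃ m ≥ N, g m = b} ⟨g N, N, le_rfl, rfl⟩
  obtain ⟨n, hn, hdec⟩ := frequently_atTop.1 hlt m
  have hanti : g n ≤ g m := Nat.rel_of_forall_rel_succ_of_le_of_le (· ≥ ·) hN hm hn
  exact hmin (g (n + 1)) ⟨n + 1, by omega, rfl⟩ (hdec.trans_le hanti)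

section Lex

variable {a b : ℕ → Ordinal}

def lexPrefix (t : ℕ) (a : ℕ → Ordinal) : Lex (Fin t → Ordinal) :=
  toLex fun i => a i

theorem lexPrefix_lt_of_lexLtBelow {t : ℕ} (h : lexLtBelow t a b) :
    lexPrefix t a < lexPrefix t b := by
  obtain ⟨j, hj, heq, hlt⟩ := h
  exact ⟨⟨j, hj⟩, fun i hi => heq i hi, hlt⟩

theorem lexPrefix_le_of_lexLeBelow {t : ℕ} (h : lexLeBelow t a b) :
    lexPrefix t a ≤ lexPrefix t b := by
  rcases h with hlt | heq
  · exact (lexPrefix_lt_of_lexLtBelow hlt).le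
  · exact (show lexPrefix t a = lexPrefix t b from
      congrArg toLex (funext fun i : Fin t => heq i i.2)).le

theorem lexLeBelow_of_lexLtBelow {t t' : ℕ} (h : lexLtBelow t' a b) :
    lexLeBelow t a b := by
  obtain ⟨j, hj, heq, hlt⟩ := h
  by_cases hjt : j < t
  · exact Or.inl ⟨j, hjt, heq, hlt⟩
  · exact Or.inr fun i hi => heq i (hi.trans_le (not_lt.1 hjt))

theorem lexLeBelow_of_lexLeBelow_of_le {t t' : ℕ} (htt' : t ≤ t') (h : lexLeBelow t' a b) :
    lexLeBelow t a b := by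
  rcases h with hlt | heq
  · exact lexLeBelow_of_lexLtBelow hlt
  · exact Or.inr fun i hi => heq i (hi.trans_le htt')

/-- `2t ≤ x + 1` says that the odd indices `1, 3, …, 2t - 1` are all at most `x`. -/
theorem lexLeBelow_of_uParEdge {x t : ℕ} (h : UParEdge x a b) (ht : 2 * t ≤ x + 1) :
    lexLeBelow t b a := by
  unfold UParEdge at h
  split_ifs at h with hx
  · obtain ⟨r, rfl⟩ := hx
    exact lexLeBelow_of_lexLeBelow_of_le (by omega) h
  · exact lexLeBelow_of_lexLtBelow h

theorem lexLtBelow_of_uParEdge_odd {k : ℕ} (h : UParEdge (2 * k + 1) a b) :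
    lexLtBelow (k + 1) b a := by
  have hodd : ¬Even (2 * k + 1) := Nat.not_even_iff_odd.2 (odd_two_mul_add_one k)
  have hdiv : (2 * k + 1) / 2 = k := by omega
  simpa only [UParEdge, if_neg hodd, hdiv] using h

end Lex

theorem uPar_paths_satisfy_parity (d : ℕ)
    (v : ℕ → ℕ → Ordinal) (x : ℕ → ℕ)
    (hx : ∀ n, x n ≤ d)
    (hedge : ∀ n, UParEdge (x n) (v n) (v (n + 1))) :
    MinInfEven x := by
  classical
  have hex : ∃ p, ∃ᶠ n in atTop, x n = p :=
    exists_frequently_eq_of_eventually_le (Eventually.of_forall hx)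
  set p := Nat.find hex
  have hfreq : ∃ᶠ n in atTop, x n = p := Nat.find_spec hex
  have hrare : ∀ q < p, ∀ᶠ n in atTop, x n ≠ q := fun q hq =>
    not_frequently.1 (Nat.find_min hex hq)
  refine ⟨p, ?_, frequently_atTop.1 hfreq, fun q hq => eventually_atTop.1 (hrare q hq)⟩
  by_contra hodd
  obtain ⟨k, hk⟩ := Nat.not_even_iff_odd.1 hodd
  let g n := lexPrefix (k + 1) (v n)
  have hle : ∀ᶠ n in atTop, g (n + 1) ≤ g n :=
    (eventually_le_of_forall_lt_eventually_ne hrare).mono fun n hn =>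
      lexPrefix_le_of_lexLeBelow (lexLeBelow_of_uParEdge (hedge n) (by omega))
  have hlt : ∃ᶠ n in atTop, g (n + 1) < g n :=
    hfreq.mono fun n hn =>
      lexPrefix_lt_of_lexLtBelow (lexLtBelow_of_uParEdge_odd (hn.trans hk ▸ hedge n))
  exact not_frequently_succ_lt_of_eventually_succ_le hle hlt
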